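/- For the metric space M described in the context (Example 5.2 of the paper), the space Lip_0(M) has the local diameter 2 property: every slice of the closed unit ball of Lip_0(M) has diameter 2. -/

import Mathlib

open scoped ENNReal

/-- The set `M̃ = {(x,y) : x ≠ y}` as a subtype. -/
def Mt (M : Type*) : Type _ := {p : M × M // p.1 ≠ p.2}

variable {M : Type*} [MetricSpace M]

/-- `ℓ∞(M̃)`. -/
noncomputable abbrev ellInfty (M : Type*) : Type _ := ↥(lp (fun _ : Mt M => ℝ) ∞)

/-- A bounded linear functional on `ℓ∞(M̃)` is positive if it is nonnegative on
nonnegative functions. -/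
def IsPositive {M : Type*} (Λ : ellInfty M →L[ℝ] ℝ) : Prop :=
  ∀ h : ellInfty M, (∀ p : Mt M, 0 ≤ h p) → 0 ≤ Λ h

/-- The indicator function of `A ⊆ M̃` as an element of `ℓ∞(M̃)`. -/
noncomputable def indicLp {M : Type*} (A : Set (Mt M)) : ellInfty M :=
  ⟨A.indicator 1, memℓp_infty (by
    refine ⟨1, ?_⟩
    rintro r ⟨p, rfl⟩
    by_cases hp : p ∈ A <;>
      simp [Set.indicator_apply, hp])⟩

/-- The image of `Lip₀(M)` in `ℓ∞(M̃)` under the de Leeuw embedding `Φ`;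
`Lip₀(M)` itself is identified with this submodule, carrying the induced
(Lipschitz) norm, and `Φ` is then the inclusion `(LipO M base).subtypeL`. -/
noncomputable def LipO (M : Type*) [MetricSpace M] (base : M) :
    Submodule ℝ (ellInfty M) where
  carrier := {g | ∃ f : M → ℝ, f base = 0 ∧
    ∀ p : Mt M, g p = (f p.1.1 - f p.1.2) / dist p.1.1 p.1.2}
  add_mem' := by
    rintro g₁ g₂ ⟨f₁, hf₁, h₁⟩ ⟨f₂, hf₂, h₂⟩
    refine ⟨f₁ + f₂, by simp [hf₁, hf₂], fun p => ?_⟩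
    have : (⇑(g₁ + g₂) : Mt M → ℝ) = ⇑g₁ + ⇑g₂ := lp.coeFn_add g₁ g₂
    rw [this]
    simp only [Pi.add_apply, h₁ p, h₂ p]
    ring
  zero_mem' := by
    refine ⟨0, rfl, fun p => ?_⟩
    have : (⇑(0 : ellInfty M) : Mt M → ℝ) = 0 := lp.coeFn_zero _ _
    simp [this]
  smul_mem' := by
    rintro c g ⟨f, hf, h⟩
    refine ⟨c • f, by simp [hf], fun p => ?_⟩
    have : (⇑(c • g) : Mt M → ℝ) = c • ⇑g := lp.coeFn_smul c g
    rw [this]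
    simp only [Pi.smul_apply, smul_eq_mul, h p]
    ring

open Classical in
/-- Evaluation of (the function represented by) `g ∈ Lip₀(M)` at `x`. -/
noncomputable def evalAux (base x : M) (g : ↥(LipO M base)) : ℝ :=
  if h : x = base then 0
  else ((g : ellInfty M) : Mt M → ℝ) ⟨(x, base), h⟩ * dist x base

/-- The evaluation functional `δ_x : Lip₀(M) → ℝ`, `δ_x(f) = f(x)`
(recovering `f` from its de Leeuw transform). -/
noncomputable def deltaF (base x : M) : ↥(LipO M base) →L[ℝ] ℝ :=
  LinearMap.mkContinuous
    { toFun := evalAux base x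
      map_add' := fun g₁ g₂ => by
        unfold evalAux
        split_ifs with h
        · simp
        · simp only [Submodule.coe_add, lp.coeFn_add, Pi.add_apply]
          erw [Pi.add_apply]
          ring
      map_smul' := fun c g => by
        unfold evalAux
        split_ifs with h
        · simp
        · simp only [Submodule.coe_smul, lp.coeFn_smul, Pi.smul_apply,
            smul_eq_mul, RingHom.id_apply]
          erw [Pi.smul_apply, smul_eq_mul]
          ring }
    (dist x base)
    (by
      intro g
      simp only [LinearMap.coe_mk, AddHom.coe_mk]
      unfold evalAux
      split_ifs with h
      · subst h
        rw [norm_zero, dist_self, zero_mul]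
      · have h1 : ‖((g : ellInfty M) : Mt M → ℝ) ⟨(x, base), h⟩‖ ≤ ‖(g : ellInfty M)‖ :=
          lp.norm_apply_le_norm ENNReal.top_ne_zero (g : ellInfty M) ⟨(x, base), h⟩
        have h2 : ‖(g : ellInfty M)‖ = ‖g‖ := rfl
        calc ‖((g : ellInfty M) : Mt M → ℝ) ⟨(x, base), h⟩ * dist x base‖
            = ‖((g : ellInfty M) : Mt M → ℝ) ⟨(x, base), h⟩‖ * dist x base := by
              rw [norm_mul, Real.norm_eq_abs (dist x base), abs_of_nonneg dist_nonneg]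
          _ ≤ ‖g‖ * dist x base := by
              exact mul_le_mul_of_nonneg_right (h2 ▸ h1) dist_nonneg
          _ = dist x base * ‖g‖ := mul_comm _ _)

/-- The Lipschitz-free space `F(M)`: the closed linear span of the evaluation
functionals inside the dual of `Lip₀(M)`. -/
noncomputable def FreeSpan (M : Type*) [MetricSpace M] (base : M) :
    Submodule ℝ (↥(LipO M base) →L[ℝ] ℝ) :=
  Submodule.span ℝ (Set.range (deltaF base))

/-- The Lipschitz-free space `F(M)`: the closed linear span of the evaluation
functionals inside the dual of `Lip₀(M)`. -/
noncomputable def FreeSp (M : Type*) [MetricSpace M] (base : M) :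
    Set (↥(LipO M base) →L[ℝ] ℝ) :=
  closure (FreeSpan M base : Set (↥(LipO M base) →L[ℝ] ℝ))

/-- The weak-star topology `σ(Lip₀(M), F(M))` on `Lip₀(M)`. -/
noncomputable def wstar (M : Type*) [MetricSpace M] (base : M) :
    TopologicalSpace ↥(LipO M base) :=
  TopologicalSpace.induced
    (fun g => fun μ : FreeSp M base => (μ : ↥(LipO M base) →L[ℝ] ℝ) g)
    inferInstance

variable {M : Type*} [MetricSpace M]

/-- The de Leeuw quotient `f(m_{x,y}) = (f x - f y)/d(x,y)`. -/
noncomputable def mQ (f : M → ℝ) (p : Mt M) : ℝ :=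
  (f p.1.1 - f p.1.2) / dist p.1.1 p.1.2

/-- `A ⊆ M̃` is `γ`-cyclically monotonic. -/
def GammaCM (γ : ℝ) (A : Set (Mt M)) : Prop :=
  ∀ (n : ℕ) (p : Fin (n + 1) → Mt M), (∀ i, p i ∈ A) →
    0 ≤ ∑ i : Fin (n + 1),
      min (dist (p i).1.1 (p (i + 1)).1.2 - γ * dist (p i).1.1 (p i).1.2)
          (dist (p i).1.2 (p (i + 1)).1.2)

/-- `A ⊆ M̃` is cyclically monotonic. -/
def CyclMono (A : Set (Mt M)) : Prop :=
  ∀ (n : ℕ) (p : Fin (n + 1) → Mt M), (∀ i, p i ∈ A) →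
    ∑ i : Fin (n + 1), dist (p i).1.1 (p i).1.2 ≤
      ∑ i : Fin (n + 1), dist (p i).1.1 (p (i + 1)).1.2

/-- `π(A)`. -/
def piA (A : Set (Mt M)) : Set M := {z | ∃ p ∈ A, p.1.1 = z ∨ p.1.2 = z}

/-- The pair `(u,v)` as an element of `M̃`. -/
def pr {M : Type*} (u v : M) (h : u ≠ v) : Mt M := ⟨(u, v), h⟩

/-- The underlying set of the metric space of Example 5.2:
points `x_i, y_i, u_i^j, v_i^j` for `i ∈ {1,2,3}` (coded by `Fin 3`)
and `j ∈ ℕ`. -/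
inductive ExPt : Type
  | x : Fin 3 → ExPt
  | y : Fin 3 → ExPt
  | u : Fin 3 → ℕ → ExPt
  | v : Fin 3 → ℕ → ExPt
deriving DecidableEq

namespace ExPt

/-- Adjacency: precisely the pairs at distance 1, namely
`y_i ~ x_{i+1}` (cyclically), `x_i ~ u_i^j`, `u_i^j ~ v_i^j`, `v_i^j ~ y_i`. -/
def adj : ExPt → ExPt → Bool
  | .y i, .x k => k == i + 1
  | .x k, .y i => k == i + 1
  | .x i, .u k _ => i == k
  | .u k _, .x i => i == k
  | .u i j, .v k l => i == k && j == l
  | .v k l, .u i j => i == k && j == l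
  | .v i _, .y k => i == k
  | .y k, .v i _ => i == k
  | _, _ => false

lemma adj_symm (a b : ExPt) : adj a b = adj b a := by
  cases a <;> cases b <;> rfl

/-- The distance of Example 5.2: `0` on the diagonal, `1` between adjacent
points, and `2` otherwise. -/
noncomputable def exDist (a b : ExPt) : ℝ :=
  if a = b then 0 else if adj a b then 1 else 2

lemma exDist_self (a : ExPt) : exDist a a = 0 := by simp [exDist]

lemma exDist_comm (a b : ExPt) : exDist a b = exDist b a := by
  unfold exDist
  rcases eq_or_ne a b with rfl | h
  · rfl
  · rw [if_neg h, if_neg (Ne.symm h), adj_symm]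

lemma one_le_exDist {a b : ExPt} (h : a ≠ b) : 1 ≤ exDist a b := by
  unfold exDist
  rw [if_neg h]
  split <;> norm_num

lemma exDist_le_two (a b : ExPt) : exDist a b ≤ 2 := by
  unfold exDist
  split
  · norm_num
  · split <;> norm_num

lemma exDist_triangle (a b c : ExPt) : exDist a c ≤ exDist a b + exDist b c := by
  rcases eq_or_ne a b with rfl | hab
  · rw [exDist_self, zero_add]
  rcases eq_or_ne b c with rfl | hbc
  · rw [exDist_self, add_zero]
  have h1 := one_le_exDist hab
  have h2 := one_le_exDist hbc
  have h3 := exDist_le_two a c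
  linarith

lemma exDist_eq_zero {a b : ExPt} (h : exDist a b = 0) : a = b := by
  by_contra hne
  have := one_le_exDist hne
  rw [h] at this
  norm_num at this

instance : TopologicalSpace ExPt := ⊥

instance : DiscreteTopology ExPt := ⟨rfl⟩

noncomputable instance : MetricSpace ExPt :=
  MetricSpace.ofDistTopology exDist exDist_self exDist_comm exDist_triangle
    (fun s => by
      constructor
      · intro _ x hx
        refine ⟨1 / 2, by norm_num, fun y hy => ?_⟩
        have : x = y := by
          by_contra hne
          have := one_le_exDist hne
          linarith
        rwa [← this]
      · intro _
        exact isOpen_discrete s)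
    (fun a b h => exDist_eq_zero h)

lemma dist_def (a b : ExPt) : dist a b = exDist a b := rfl

end ExPt

/-- `Lip₀(M)` has the local diameter 2 property: every slice of the closed
unit ball has diameter 2. -/
def LD2P (M : Type*) [MetricSpace M] (base : M) : Prop :=
  ∀ F : ↥(LipO M base) →L[ℝ] ℝ, ‖F‖ = 1 → ∀ α : ℝ, 0 < α →
    Metric.diam {f : ↥(LipO M base) | ‖f‖ ≤ 1 ∧ 1 - α < F f} = 2

/-!
All distances of `ExPt` are `0`, `1` or `2`. For a `1`-Lipschitz `f`, going around the hexagon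
`x₀ y₀ x₁ y₁ x₂ y₂` shows that some gap `f xᵢ - f yᵢ` lies in `[-3/2, 3/2]`, hence within `1/2`
of an integer `k ∈ {-1, 0, 1}`. Since all distances are integers, along any chain from `xᵢ` to
`yᵢ` the increment of `f` is within the total slack `Σ (d(p, q) - |f p - f q|)` of an integer, so
the distance of the gap to `k` is at most the slack path distance from `xᵢ` to `yᵢ`; a function
`e` that is `1`-Lipschitz for that path distance moves the gap to `k` while `f ± e` both stay
`1`-Lipschitz. So a near-norming `f` is the midpoint of two functions in the ball, one of which
is still near-norming and has gap at most `1`. Across such a gap the values at `uᵢʲ, vᵢʲ` can be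
reassigned with difference `+1` or `-1`, giving two functions at distance `2`. The bumps at
`uᵢʲ` (and at `vᵢʲ`) have all signed sums in the unit ball, so `F` tends to `0` on them and the
reassignment for a suitable `j` costs almost nothing.
-/

open scoped NNReal Topology
open Filter Metric Function

section NormedSpace

variable {E : Type*} [NormedAddCommGroup E]

lemma diam_eq_two_of_subset_closedBall {S : Set E} (hS : S ⊆ closedBall 0 1)
    {g₁ g₂ : E} (hg₁ : g₁ ∈ S) (hg₂ : g₂ ∈ S) (h : 2 ≤ ‖g₁ - g₂‖) : diam S = 2 := by
  refine le_antisymm ?_ ?_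
  · calc diam S ≤ diam (closedBall (0 : E) 1) := diam_mono hS isBounded_closedBall
      _ ≤ 2 * 1 := diam_closedBall zero_le_one
      _ = 2 := mul_one 2
  · rw [← dist_eq_norm] at h
    exact h.trans (dist_le_diam_of_mem (isBounded_closedBall.subset hS) hg₁ hg₂)

variable [NormedSpace ℝ E]

lemma ContinuousLinearMap.exists_norm_le_one_lt_apply (F : E →L[ℝ] ℝ) {r : ℝ} (hr : r < ‖F‖) :
    ∃ g : E, ‖g‖ ≤ 1 ∧ r < F g := by
  obtain ⟨g, hg, hr⟩ := F.exists_lt_apply_of_lt_opNorm hr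
  rcases lt_abs.1 (Real.norm_eq_abs _ ▸ hr) with hr | hr
  · exact ⟨g, hg.le, hr⟩
  · exact ⟨-g, (norm_neg g).trans_le hg.le, by rwa [map_neg]⟩

lemma ContinuousLinearMap.tendsto_apply_of_norm_sum_le (F : E →L[ℝ] ℝ) {g : ℕ → E} {C : ℝ}
    (hg : ∀ (n : ℕ) (ε : ℕ → ℝ), (∀ j, |ε j| ≤ 1) → ‖∑ j ∈ Finset.range n, ε j • g j‖ ≤ C) :
    Tendsto (fun j => F (g j)) atTop (𝓝 0) := by
  have hsum : ∀ n, ∑ j ∈ Finset.range n, |F (g j)| ≤ ‖F‖ * C := fun n => by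
    let ε : ℕ → ℝ := fun j => SignType.sign (F (g j))
    have hε : ∀ j, |ε j| ≤ 1 := fun j => by
      rcases lt_trichotomy (F (g j)) 0 with h | h | h <;> simp [ε, h]
    calc ∑ j ∈ Finset.range n, |F (g j)| = F (∑ j ∈ Finset.range n, ε j • g j) := by
          simp only [map_sum, map_smul, smul_eq_mul, ε, sign_mul_self]
      _ ≤ ‖F (∑ j ∈ Finset.range n, ε j • g j)‖ := Real.le_norm_self _
      _ ≤ ‖F‖ * C := F.le_of_opNorm_le_of_le le_rfl (hg n ε hε)
  have : Summable fun j => |F (g j)| := summable_of_sum_range_le (fun _ => abs_nonneg _) hsum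
  exact (tendsto_zero_iff_abs_tendsto_zero _).2 this.tendsto_atTop_zero

end NormedSpace

lemma abs_sub_int_le_abs_sub_int_of_le_half {t : ℝ} {k : ℤ} (hk : |t - k| ≤ 1 / 2) (m : ℤ) :
    |t - k| ≤ |t - m| := by
  rcases eq_or_ne k m with rfl | hkm
  · rfl
  have h1 : (1 : ℝ) ≤ |(k : ℝ) - m| := by exact_mod_cast Int.one_le_abs (sub_ne_zero.2 hkm)
  have h2 := abs_sub_le (k : ℝ) t m
  rw [abs_sub_comm (k : ℝ) t] at h2
  linarith

lemma exists_int_abs_le_one_abs_sub_le_half {t : ℝ} (ht : |t| ≤ 3 / 2) :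
    ∃ k : ℤ, |(k : ℝ)| ≤ 1 ∧ |t - k| ≤ 1 / 2 := by
  obtain ⟨ht₁, ht₂⟩ := abs_le.1 ht
  rcases lt_or_ge t (-1 / 2) with h | h
  · exact ⟨-1, by norm_num, abs_le.2 ⟨by push_cast; linarith, by push_cast; linarith⟩⟩
  rcases le_or_gt t (1 / 2) with h' | h'
  · exact ⟨0, by norm_num, abs_le.2 ⟨by push_cast; linarith, by push_cast; linarith⟩⟩
  · exact ⟨1, by norm_num, abs_le.2 ⟨by push_cast; linarith, by push_cast; linarith⟩⟩

namespace LipO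

variable {base : M}

lemma deltaF_apply_of_eq_mQ {g : LipO M base} {f : M → ℝ} (hb : f base = 0)
    (hg : ∀ p, (g : ellInfty M) p = mQ f p) (x : M) : deltaF base x g = f x := by
  simp only [deltaF, LinearMap.mkContinuous_apply, LinearMap.coe_mk, AddHom.coe_mk, evalAux]
  split_ifs with h
  · rw [h, hb]
  · rw [hg ⟨(x, base), h⟩]
    change (f x - f base) / dist x base * dist x base = f x
    rw [hb, sub_zero, div_mul_cancel₀ _ (dist_ne_zero.2 h)]

@[simp]
lemma deltaF_base (g : LipO M base) : deltaF base base g = 0 := by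
  simp [deltaF, evalAux]

lemma coe_apply (g : LipO M base) (p : Mt M) :
    (g : ellInfty M) p = mQ (fun x => deltaF base x g) p := by
  obtain ⟨f, hb, hg⟩ := g.2
  simp only [mQ, deltaF_apply_of_eq_mQ hb hg]
  exact hg p

lemma ext {g h : LipO M base} (H : ∀ x, deltaF base x g = deltaF base x h) : g = h := by
  refine Subtype.ext (lp.ext (funext fun p => ?_))
  simp only [coe_apply, H]

lemma norm_mQ_le {f : M → ℝ} {K : ℝ≥0} (hf : LipschitzWith K f) (p : Mt M) :
    ‖mQ f p‖ ≤ K := by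
  have hd : 0 < dist p.1.1 p.1.2 := dist_pos.2 p.2
  rw [mQ, norm_div, Real.norm_of_nonneg hd.le, div_le_iff₀ hd, ← dist_eq_norm]
  exact hf.dist_le_mul _ _

lemma norm_le_iff_lipschitzWith {g : LipO M base} {K : ℝ≥0} :
    ‖g‖ ≤ K ↔ LipschitzWith K (fun x => deltaF base x g) := by
  refine ⟨fun h => LipschitzWith.of_dist_le_mul fun x y => ?_, fun h => ?_⟩
  · rcases eq_or_ne x y with rfl | hxy
    · simp
    have hd : 0 < dist x y := dist_pos.2 hxy
    have := coe_apply g ⟨(x, y), hxy⟩ ▸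
      (lp.norm_apply_le_norm ENNReal.top_ne_zero (g : ellInfty M) ⟨(x, y), hxy⟩).trans h
    simp only [mQ, norm_div, Real.norm_of_nonneg hd.le, div_le_iff₀ hd] at this
    rwa [dist_eq_norm]
  · exact lp.norm_le_of_forall_le K.2 fun p => (coe_apply g p).symm ▸ norm_mQ_le h p

lemma norm_le_one_iff_lipschitzWith {g : LipO M base} :
    ‖g‖ ≤ 1 ↔ LipschitzWith 1 (fun x => deltaF base x g) := by
  simpa using norm_le_iff_lipschitzWith (g := g) (K := 1)

lemma lipschitzWith_deltaF (g : LipO M base) :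
    LipschitzWith ‖g‖₊ (fun x => deltaF base x g) :=
  norm_le_iff_lipschitzWith.1 le_rfl

noncomputable def ofLipschitz (f : M → ℝ) {K : ℝ≥0} (hf : LipschitzWith K f) (hb : f base = 0) :
    LipO M base :=
  ⟨⟨mQ f, memℓp_infty ⟨K, by rintro _ ⟨p, rfl⟩; exact norm_mQ_le hf p⟩⟩, f, hb, fun _ => rfl⟩

@[simp]
lemma deltaF_ofLipschitz {f : M → ℝ} {K : ℝ≥0} (hf : LipschitzWith K f) (hb : f base = 0)
    (x : M) : deltaF base x (ofLipschitz f hf hb) = f x :=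
  deltaF_apply_of_eq_mQ hb (fun _ => rfl) x

lemma norm_ofLipschitz_le {f : M → ℝ} {K : ℝ≥0} (hf : LipschitzWith K f) (hb : f base = 0) :
    ‖ofLipschitz f hf hb‖ ≤ K :=
  norm_le_iff_lipschitzWith.2 (by simpa only [deltaF_ofLipschitz] using hf)

end LipO

section Slack

variable (f : M → ℝ)

noncomputable def slack (p q : M) : ℝ≥0 := Real.toNNReal (dist p q - |f p - f q|)

lemma slack_self (p : M) : slack f p p = 0 := by simp [slack]

lemma slack_comm (p q : M) : slack f p q = slack f q p := by
  rw [slack, slack, dist_comm, abs_sub_comm]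

/-- The largest pseudometric below `slack f`: the infimum of the total slack over chains. -/
noncomputable def slackDist (p q : M) : ℝ :=
  @dist M (PseudoMetricSpace.ofPreNNDist (slack f) (slack_self f) (slack_comm f)).toDist p q

variable {f}

lemma slackDist_self (x : M) : slackDist f x x = 0 := by
  let _ := PseudoMetricSpace.ofPreNNDist (slack f) (slack_self f) (slack_comm f)
  exact dist_self x

lemma abs_slackDist_sub_le (x p q : M) :
    |slackDist f x p - slackDist f x q| ≤ slackDist f p q := by
  let _ := PseudoMetricSpace.ofPreNNDist (slack f) (slack_self f) (slack_comm f)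
  have h := abs_dist_sub_le p q x
  rwa [dist_comm p x, dist_comm q x] at h

lemma slackDist_le (hf : LipschitzWith 1 f) (p q : M) :
    slackDist f p q ≤ dist p q - |f p - f q| := by
  refine (PseudoMetricSpace.dist_ofPreNNDist_le _ _ _ p q).trans_eq ?_
  rw [slack, Real.coe_toNNReal _ (sub_nonneg.2 _)]
  simpa [Real.dist_eq] using hf.dist_le_mul p q

lemma lipschitzWith_one_add_of_abs_sub_le {e : M → ℝ}
    (he : ∀ p q, |e p - e q| ≤ dist p q - |f p - f q|) : LipschitzWith 1 (f + e) := by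
  refine LipschitzWith.of_dist_le_mul fun p q => ?_
  rw [NNReal.coe_one, one_mul, Real.dist_eq, Pi.add_apply, Pi.add_apply, add_sub_add_comm]
  linarith [abs_add_le (f p - f q) (e p - e q), he p q]

lemma exists_perturbation_of_abs_le_slackDist (hf : LipschitzWith 1 f) (x y b : M) {c : ℝ}
    (hc : |c| ≤ slackDist f x y) :
    ∃ e : M → ℝ, LipschitzWith 1 (f + e) ∧ LipschitzWith 1 (f - e) ∧ e b = 0 ∧
      e x - e y = -c := by
  set h : ℝ → ℝ := fun r => max (-r) (min r c)
  have h_lip : ∀ r r', |h r - h r'| ≤ |r - r'| := fun r r' =>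
    (abs_max_sub_max_le_max _ _ _ _).trans <| max_le (by rw [neg_sub_neg, abs_sub_comm])
      ((abs_min_sub_min_le_max _ _ _ _).trans (by simp))
  set e : M → ℝ := fun p => h (slackDist f x p) - h (slackDist f x b)
  have he : ∀ p q, |e p - e q| ≤ dist p q - |f p - f q| := fun p q =>
    calc |e p - e q| = |h (slackDist f x p) - h (slackDist f x q)| := by
          simp only [e, sub_sub_sub_cancel_right]
      _ ≤ |slackDist f x p - slackDist f x q| := h_lip _ _
      _ ≤ slackDist f p q := abs_slackDist_sub_le x p q
      _ ≤ dist p q - |f p - f q| := slackDist_le hf p q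
  refine ⟨e, lipschitzWith_one_add_of_abs_sub_le he, ?_, sub_self _, ?_⟩
  · rw [sub_eq_add_neg]
    exact lipschitzWith_one_add_of_abs_sub_le fun p q => by
      simpa only [Pi.neg_apply, neg_sub_neg, abs_sub_comm] using he p q
  · obtain ⟨hc₁, hc₂⟩ := abs_le.1 hc
    have h0 : h 0 = 0 := by simp [h]
    have hxy : h (slackDist f x y) = c := by simp [h, hc₁, hc₂]
    simp only [e, slackDist_self, h0, hxy]
    ring

section IntegerDistances

variable (hM : ∀ p q : M, ∃ n : ℤ, dist p q = n) (hf : LipschitzWith 1 f)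
include hM hf

lemma exists_int_abs_sub_le_slack (p q : M) : ∃ m : ℤ, |f p - f q - m| ≤ slack f p q := by
  obtain ⟨n, hn⟩ := hM p q
  have hpq : |f p - f q| ≤ n := by simpa [Real.dist_eq, hn] using hf.dist_le_mul p q
  rw [slack, Real.coe_toNNReal _ (sub_nonneg.2 (hn ▸ hpq)), hn]
  rcases le_total 0 (f p - f q) with h | h
  · refine ⟨n, ?_⟩
    rw [abs_of_nonneg h] at hpq ⊢
    rw [abs_of_nonpos (by linarith)]
    linarith
  · refine ⟨-n, ?_⟩
    rw [abs_of_nonpos h] at hpq ⊢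
    rw [Int.cast_neg, abs_of_nonneg (by linarith)]
    linarith

lemma exists_int_abs_sub_le_chain_slack (q : M) :
    ∀ (l : List M) (p : M), ∃ m : ℤ,
      |f p - f q - m| ≤ (((p :: l).zipWith (slack f) (l ++ [q])).sum : ℝ)
  | [], p => by simpa using exists_int_abs_sub_le_slack hM hf p q
  | r :: l, p => by
    obtain ⟨m₁, hm₁⟩ := exists_int_abs_sub_le_slack hM hf p r
    obtain ⟨m₂, hm₂⟩ := exists_int_abs_sub_le_chain_slack q l r
    refine ⟨m₁ + m₂, ?_⟩
    simp only [List.cons_append, List.zipWith_cons_cons, List.sum_cons, NNReal.coe_add]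
    calc |f p - f q - ↑(m₁ + m₂)| = |(f p - f r - m₁) + (f r - f q - m₂)| := by
          push_cast; ring_nf
      _ ≤ _ := (abs_add_le _ _).trans (add_le_add hm₁ (by simpa using hm₂))

lemma abs_sub_int_le_slackDist {p q : M} {k : ℤ} (hk : |f p - f q - k| ≤ 1 / 2) :
    |f p - f q - k| ≤ slackDist f p q := by
  rw [slackDist, PseudoMetricSpace.dist_ofPreNNDist, NNReal.coe_iInf]
  refine le_ciInf fun l => ?_
  obtain ⟨m, hm⟩ := exists_int_abs_sub_le_chain_slack hM hf q l p
  exact (abs_sub_int_le_abs_sub_int_of_le_half hk m).trans hm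

lemma exists_perturbation_of_abs_sub_int_le (x y b : M) {k : ℤ}
    (hk : |f x - f y - k| ≤ 1 / 2) :
    ∃ e : M → ℝ, LipschitzWith 1 (f + e) ∧ LipschitzWith 1 (f - e) ∧ e b = 0 ∧
      (f + e) x - (f + e) y = k := by
  obtain ⟨e, h₁, h₂, hb, he⟩ :=
    exists_perturbation_of_abs_le_slackDist hf x y b (abs_sub_int_le_slackDist hM hf hk)
  exact ⟨e, h₁, h₂, hb, by simp only [Pi.add_apply]; linarith⟩

end IntegerDistances

end Slack

lemma LipO.exists_norm_le_one_deltaF_sub_eq_int {base : M}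
    (hM : ∀ p q : M, ∃ n : ℤ, dist p q = n) {F : LipO M base →L[ℝ] ℝ} (hF : ‖F‖ ≤ 1)
    {g : LipO M base} (hg : ‖g‖ ≤ 1) {x y : M} {k : ℤ}
    (hk : |deltaF base x g - deltaF base y g - k| ≤ 1 / 2) :
    ∃ g' : LipO M base, ‖g'‖ ≤ 1 ∧ 2 * F g - 1 ≤ F g' ∧
      deltaF base x g' - deltaF base y g' = k := by
  set f := fun p => deltaF base p g
  have hf : LipschitzWith 1 f := norm_le_one_iff_lipschitzWith.1 hg
  obtain ⟨e, hf₁, hf₂, he, hxy⟩ := exists_perturbation_of_abs_sub_int_le hM hf x y base hk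
  have hb : f base = 0 := deltaF_base g
  let g₁ : LipO M base := ofLipschitz (f + e) hf₁ (by simp [hb, he])
  let g₂ : LipO M base := ofLipschitz (f - e) hf₂ (by simp [hb, he])
  have hsum : g₁ + g₂ = (2 : ℝ) • g := ext fun p => by
    simp only [map_add, map_smul, g₁, g₂, deltaF_ofLipschitz, Pi.add_apply, Pi.sub_apply,
      smul_eq_mul, f]
    ring
  have hF₂ : F g₂ ≤ 1 := (le_abs_self _).trans <|
    F.le_of_opNorm_le_of_le hF (norm_ofLipschitz_le hf₂ _) |>.trans_eq (one_mul 1)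
  refine ⟨g₁, norm_ofLipschitz_le hf₁ _, ?_, by simpa only [g₁, deltaF_ofLipschitz] using hxy⟩
  have := congrArg F hsum
  rw [map_add, map_smul, smul_eq_mul] at this
  linarith

lemma LipschitzOnWith.update_insert [DecidableEq M] {φ : M → ℝ} {s : Set M} {K : ℝ≥0}
    (hφ : LipschitzOnWith K φ s) {u : M} (hu : u ∉ s) {t : ℝ}
    (ht : ∀ w ∈ s, |t - φ w| ≤ K * dist u w) :
    LipschitzOnWith K (update φ u t) (insert u s) := by
  have hne : ∀ w ∈ s, w ≠ u := fun w hw h => hu (h ▸ hw)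
  refine LipschitzOnWith.of_dist_le_mul fun p hp q hq => ?_
  rcases hp with rfl | hp <;> rcases hq with rfl | hq
  · simp
  · simpa [Real.dist_eq, hne q hq] using ht q hq
  · simpa [Real.dist_eq, hne p hp, abs_sub_comm, dist_comm] using ht p hp
  · simpa [hne p hp, hne q hq] using hφ.dist_le_mul p hp q hq

section UniformlyDiscrete

variable (h1 : ∀ p q : M, p ≠ q → 1 ≤ dist p q)
include h1

lemma lipschitzWith_one_of_abs_sub_le {ψ : M → ℝ}
    (hψ : ∀ p q, p ≠ q → |ψ p - ψ q| ≤ 1 ∨ 2 ≤ dist p q ∧ |ψ p - ψ q| ≤ 2) :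
    LipschitzWith 1 ψ := by
  refine LipschitzWith.mk_one fun p q => ?_
  rcases eq_or_ne p q with rfl | hpq
  · simp
  rw [Real.dist_eq]
  rcases hψ p q hpq with h | ⟨hd, h⟩
  · exact h.trans (h1 p q hpq)
  · exact h.trans hd

variable [DecidableEq M]

lemma exists_lipschitzWith_update_update (hdiam : ∀ p q : M, dist p q ≤ 2)
    {φ : M → ℝ} (hφ : LipschitzWith 1 φ) {x u v y : M} (huv : u ≠ v)
    (hu : ∀ w, w ≠ u → w ≠ v → w ≠ x → 2 ≤ dist u w)
    (hv : ∀ w, w ≠ u → w ≠ v → w ≠ y → 2 ≤ dist v w)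
    (hxy : |φ x - φ y| ≤ 1) :
    ∃ t : ℝ, LipschitzWith 1 (update (update φ v (t - 1)) u t) ∧
      ∀ w, |t - φ w| ≤ 2 ∧ |t - 1 - φ w| ≤ 2 := by
  have hφ2 : ∀ p q, |φ p - φ q| ≤ 2 := fun p q => by
    simpa [Real.dist_eq] using (hφ.dist_le_mul p q).trans (by simpa using hdiam p q)
  have hbdd : BddBelow (Set.range φ) := ⟨φ x - 2, by
    rintro _ ⟨w, rfl⟩; linarith [(abs_le.1 (hφ2 x w)).2]⟩
  have : Nonempty M := ⟨x⟩
  set I := ⨅ w, φ w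
  have hI : ∀ w, I ≤ φ w := fun w => ciInf_le hbdd w
  have hI' : ∀ w, φ w - 2 ≤ I := fun w => le_ciInf fun w' => by
    linarith [(abs_le.1 (hφ2 w w')).2]
  -- capping `t` by `I + 2` keeps `t` and `t - 1` within `2` of every value of `φ`
  set t := min (φ x + 1) (I + 2)
  have := hI' x; have := hI' y; have := abs_le.1 hxy
  have htx : |t - φ x| ≤ 1 := by
    rcases min_cases (φ x + 1) (I + 2) with h | h <;> exact abs_le.2 ⟨by linarith, by linarith⟩
  have hty : |t - 1 - φ y| ≤ 1 := by
    rcases min_cases (φ x + 1) (I + 2) with h | h <;> exact abs_le.2 ⟨by linarith, by linarith⟩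
  have ht : ∀ w, |t - φ w| ≤ 2 ∧ |t - 1 - φ w| ≤ 2 := fun w => by
    have := hI w; have := hI' w; have := abs_le.1 (hφ2 x w)
    rcases min_cases (φ x + 1) (I + 2) with h | h <;>
      exact ⟨abs_le.2 ⟨by linarith, by linarith⟩, abs_le.2 ⟨by linarith, by linarith⟩⟩
  refine ⟨t, ?_, ht⟩
  have hv' : LipschitzOnWith 1 (update φ v (t - 1)) (insert v {u, v}ᶜ) := by
    refine (hφ.lipschitzOnWith (s := {u, v}ᶜ)).update_insert (by simp) fun w hw => ?_
    simp only [Set.mem_compl_iff, Set.mem_insert_iff, Set.mem_singleton_iff, not_or] at hw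
    rw [NNReal.coe_one, one_mul]
    by_cases hwy : w = y
    · subst hwy; exact hty.trans (h1 v w (Ne.symm hw.2))
    · exact (ht w).2.trans (hv w hw.1 hw.2 hwy)
  have huv' := hv'.update_insert (u := u) (t := t) (by simp [huv]) fun w hw => by
    rw [NNReal.coe_one, one_mul]
    by_cases hwv : w = v
    · simpa [hwv] using h1 u v huv
    simp only [Set.mem_insert_iff, Set.mem_compl_iff, Set.mem_singleton_iff, not_or, hwv,
      false_or] at hw
    rw [update_of_ne hwv]
    by_cases hwx : w = x
    · subst hwx; exact htx.trans (h1 u w (Ne.symm hw.1))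
    · exact (ht w).1.trans (hu w hw.1 hwv hwx)
  rw [show insert u (insert v ({u, v}ᶜ : Set M)) = Set.univ by ext; simp; tauto] at huv'
  exact lipschitzOnWith_univ.1 huv'

lemma lipschitzWith_single (a : M) : LipschitzWith 1 (Pi.single a (1 : ℝ)) :=
  lipschitzWith_one_of_abs_sub_le h1 fun p q _ => Or.inl <| by
    by_cases hp : p = a <;> by_cases hq : q = a <;> simp [hp, hq]

lemma lipschitzWith_sum_mul_single {a : ℕ → M} (ha : Pairwise fun j j' => 2 ≤ dist (a j) (a j'))
    (S : Finset ℕ) {ε : ℕ → ℝ} (hε : ∀ j, |ε j| ≤ 1) :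
    LipschitzWith 1 fun p => ∑ j ∈ S, ε j * (Pi.single (a j) (1 : ℝ) : M → ℝ) p := by
  set ψ := fun p => ∑ j ∈ S, ε j * (Pi.single (a j) (1 : ℝ) : M → ℝ) p
  have hsupp : ∀ p, ψ p ≠ 0 → ∃ j ∈ S, p = a j := fun p hp => by
    obtain ⟨j, hj, hpj⟩ := Finset.exists_ne_zero_of_sum_ne_zero hp
    exact ⟨j, hj, by_contra fun h => hpj (by simp [h])⟩
  have hinj : Injective a := fun j j' h => by_contra fun hne =>
    (ha hne).not_gt (by rw [h, dist_self]; exact two_pos)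
  have hle : ∀ p, |ψ p| ≤ 1 := fun p => by
    by_cases hp : ψ p = 0
    · simp [hp]
    obtain ⟨j, hj, rfl⟩ := hsupp p hp
    rw [show ψ (a j) = _ from Finset.sum_eq_single_of_mem j hj fun j' _ hj' => by
      simp [hinj.eq_iff, Ne.symm hj']]
    simpa using hε j
  refine lipschitzWith_one_of_abs_sub_le h1 fun p q hpq => ?_
  by_cases hp : ψ p = 0
  · exact Or.inl (by simpa [hp] using hle q)
  by_cases hq : ψ q = 0
  · exact Or.inl (by simpa [hq] using hle p)
  obtain ⟨j, -, rfl⟩ := hsupp p hp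
  obtain ⟨j', -, rfl⟩ := hsupp q hq
  refine Or.inr ⟨ha fun h => hpq (h ▸ rfl), ?_⟩
  linarith [abs_sub (ψ (a j)) (ψ (a j')), hle (a j), hle (a j')]

namespace LipO

variable {base : M}

noncomputable def bump (a : M) (ha : a ≠ base) : LipO M base :=
  ofLipschitz (Pi.single a 1) (lipschitzWith_single h1 a) (by simp [Ne.symm ha])

@[simp]
lemma deltaF_bump (a : M) (ha : a ≠ base) (p : M) :
    deltaF base p (bump h1 a ha) = (Pi.single a (1 : ℝ) : M → ℝ) p :=
  deltaF_ofLipschitz _ _ p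

lemma tendsto_apply_bump (F : LipO M base →L[ℝ] ℝ) {a : ℕ → M}
    (ha : Pairwise fun j j' => 2 ≤ dist (a j) (a j')) (hbase : ∀ j, a j ≠ base) :
    Tendsto (fun j => F (bump h1 (a j) (hbase j))) atTop (𝓝 0) := by
  refine F.tendsto_apply_of_norm_sum_le (C := 1) fun n ε hε => ?_
  refine norm_le_one_iff_lipschitzWith.2 ?_
  simpa only [map_sum, map_smul, deltaF_bump, smul_eq_mul]
    using lipschitzWith_sum_mul_single h1 ha (Finset.range n) hε

lemma deltaF_add_smul_bump_add_smul_bump (g : LipO M base) {u v : M} (huv : u ≠ v)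
    (hu : u ≠ base) (hv : v ≠ base) (t s : ℝ) (p : M) :
    deltaF base p (g + (t - deltaF base u g) • bump h1 u hu + (s - deltaF base v g) • bump h1 v hv)
      = update (update (fun x => deltaF base x g) v s) u t p := by
  by_cases hpu : p = u
  · subst hpu; simp [huv]
  by_cases hpv : p = v
  · subst hpv; simp [hpu]
  simp [hpu, hpv]

lemma exists_far_pair (hdiam : ∀ p q : M, dist p q ≤ 2) {x u v y : M} (huv : dist u v = 1)
    (hub : u ≠ base) (hvb : v ≠ base)
    (hu : ∀ w, w ≠ u → w ≠ v → w ≠ x → 2 ≤ dist u w)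
    (hv : ∀ w, w ≠ u → w ≠ v → w ≠ y → 2 ≤ dist v w)
    {g : LipO M base} (hg : ‖g‖ ≤ 1) (hxy : |deltaF base x g - deltaF base y g| ≤ 1)
    (F : LipO M base →L[ℝ] ℝ) :
    ∃ G₁ G₂ : LipO M base, 2 ≤ ‖G₁ - G₂‖ ∧ ∀ G ∈ ({G₁, G₂} : Set (LipO M base)), ‖G‖ ≤ 1 ∧
      F g - 2 * (|F (bump h1 u hub)| + |F (bump h1 v hvb)|) ≤ F G := by
  set φ := fun p => deltaF base p g
  have hφ : LipschitzWith 1 φ := norm_le_one_iff_lipschitzWith.1 hg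
  have huv' : u ≠ v := fun h => by simp [h] at huv
  obtain ⟨t₁, hL₁, ht₁⟩ := exists_lipschitzWith_update_update h1 hdiam hφ huv' hu hv hxy
  obtain ⟨t₂, hL₂, ht₂⟩ := exists_lipschitzWith_update_update h1 hdiam hφ huv'.symm
    (fun w h h' => hv w h' h) (fun w h h' => hu w h' h) (by rwa [abs_sub_comm])
  set G := fun (t s : ℝ) => g + (t - φ u) • bump h1 u hub + (s - φ v) • bump h1 v hvb
  have hδ := deltaF_add_smul_bump_add_smul_bump h1 g huv' hub hvb
  have hFG : ∀ t s, (∀ w, |t - φ w| ≤ 2) → (∀ w, |s - φ w| ≤ 2) →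
      F g - 2 * (|F (bump h1 u hub)| + |F (bump h1 v hvb)|) ≤ F (G t s) := fun t s ht hs => by
    simp only [G, map_add, map_smul, smul_eq_mul]
    have h₁ := neg_abs_le ((t - φ u) * F (bump h1 u hub))
    have h₂ := neg_abs_le ((s - φ v) * F (bump h1 v hvb))
    rw [abs_mul] at h₁ h₂
    nlinarith [ht u, hs v, abs_nonneg (F (bump h1 u hub)), abs_nonneg (F (bump h1 v hvb))]
  refine ⟨G t₁ (t₁ - 1), G (t₂ - 1) t₂, ?_, ?_⟩
  · have := (lipschitzWith_deltaF (G t₁ (t₁ - 1) - G (t₂ - 1) t₂)).dist_le_mul u v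
    rw [map_sub, map_sub, hδ, hδ, hδ, hδ, huv, mul_one, coe_nnnorm, Real.dist_eq] at this
    simp only [update_self, update_of_ne huv'.symm] at this
    rwa [show t₁ - (t₂ - 1) - (t₁ - 1 - t₂) = 2 by ring, abs_two] at this
  · rintro _ (rfl | rfl)
    · refine ⟨norm_le_one_iff_lipschitzWith.2 ?_, hFG _ _ (fun w => (ht₁ w).1) (fun w => (ht₁ w).2)⟩
      rwa [show (fun p => deltaF base p (G t₁ (t₁ - 1))) = _ from funext (hδ _ _)]
    · refine ⟨norm_le_one_iff_lipschitzWith.2 ?_, hFG _ _ (fun w => (ht₂ w).2) (fun w => (ht₂ w).1)⟩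
      rwa [show (fun p => deltaF base p (G (t₂ - 1) t₂)) = _ from funext (hδ _ _),
        ← update_comm huv']

end LipO

end UniformlyDiscrete

namespace ExPt

lemma exists_int_dist (a b : ExPt) : ∃ n : ℤ, dist a b = n := by
  rw [dist_def, exDist]
  split_ifs
  exacts [⟨0, by simp⟩, ⟨1, by simp⟩, ⟨2, by simp⟩]

lemma one_le_dist (a b : ExPt) (h : a ≠ b) : 1 ≤ dist a b := one_le_exDist h

lemma dist_le_two (a b : ExPt) : dist a b ≤ 2 := exDist_le_two a b

lemma dist_eq_one {a b : ExPt} (h : adj a b) : dist a b = 1 := by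
  have hab : a ≠ b := by rintro rfl; cases a <;> simp [adj] at h
  rw [dist_def, exDist, if_neg hab, if_pos h]

lemma dist_eq_two {a b : ExPt} (hab : a ≠ b) (h : ¬adj a b) : dist a b = 2 := by
  rw [dist_def, exDist, if_neg hab, if_neg h]

lemma two_le_dist_u (i : Fin 3) (j : ℕ) (w : ExPt) (hu : w ≠ u i j) (hv : w ≠ v i j)
    (hx : w ≠ x i) : 2 ≤ dist (u i j) w := by
  refine (dist_eq_two (Ne.symm hu) ?_).ge
  cases w <;> simp_all [adj, @eq_comm _ i, @eq_comm _ j]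

lemma two_le_dist_v (i : Fin 3) (j : ℕ) (w : ExPt) (hu : w ≠ u i j) (hv : w ≠ v i j)
    (hy : w ≠ y i) : 2 ≤ dist (v i j) w := by
  refine (dist_eq_two (Ne.symm hv) ?_).ge
  cases w <;> simp_all [adj, @eq_comm _ i]

lemma pairwise_two_le_dist_u (i : Fin 3) : Pairwise fun j j' => 2 ≤ dist (u i j) (u i j') :=
  fun j j' h => two_le_dist_u i j _ (by simp [Ne.symm h]) (by simp) (by simp)

lemma pairwise_two_le_dist_v (i : Fin 3) : Pairwise fun j j' => 2 ≤ dist (v i j) (v i j') :=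
  fun j j' h => two_le_dist_v i j _ (by simp) (by simp [Ne.symm h]) (by simp)

lemma exists_abs_sub_le_three_halves {f : ExPt → ℝ} (hf : LipschitzWith 1 f) :
    ∃ i, |f (x i) - f (y i)| ≤ 3 / 2 := by
  have h2 : ∀ a b, -2 ≤ f a - f b ∧ f a - f b ≤ 2 := fun a b => abs_le.1 <| by
    simpa [Real.dist_eq] using (hf.dist_le_mul a b).trans (by simpa using dist_le_two a b)
  have h1 : ∀ i, -1 ≤ f (y i) - f (x (i + 1)) ∧ f (y i) - f (x (i + 1)) ≤ 1 := fun i =>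
    abs_le.1 <| by simpa [Real.dist_eq, dist_eq_one (a := y i) (b := x (i + 1)) (by simp [adj])]
      using hf.dist_le_mul (y i) (x (i + 1))
  by_contra! h
  have e0 := h1 0; have e1 := h1 1; have e2 := h1 2
  simp only [show (0 : Fin 3) + 1 = 1 from rfl, show (1 : Fin 3) + 1 = 2 from rfl,
    show (2 : Fin 3) + 1 = 0 from rfl] at e0 e1 e2
  rcases lt_abs.1 (h 0) with d0 | d0 <;> rcases lt_abs.1 (h 1) with d1 | d1 <;>
    rcases lt_abs.1 (h 2) with d2 | d2 <;>
    linarith [h2 (x 0) (y 1), h2 (x 1) (y 2), h2 (x 2) (y 0), h2 (x 0) (y 2), h2 (x 1) (y 0),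
      h2 (x 2) (y 1)]

end ExPt

/-- Example 5.2: the space `Lip₀(M)` over the metric space `M = ExPt`
(with base point `0 = x_1`) has the local diameter 2 property. -/
theorem stmt17 : LD2P ExPt (ExPt.x 0) := by
  intro F hF α hα
  obtain ⟨g, hg, hFg⟩ := F.exists_norm_le_one_lt_apply (r := 1 - α / 4) (by linarith)
  obtain ⟨i, hi⟩ := ExPt.exists_abs_sub_le_three_halves (LipO.norm_le_one_iff_lipschitzWith.1 hg)
  obtain ⟨k, hk, hgk⟩ := exists_int_abs_le_one_abs_sub_le_half hi
  obtain ⟨g', hg', hFg', hk'⟩ :=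
    LipO.exists_norm_le_one_deltaF_sub_eq_int ExPt.exists_int_dist hF.le hg hgk
  have hu := LipO.tendsto_apply_bump ExPt.one_le_dist F
    (a := fun j => ExPt.u i j) (ExPt.pairwise_two_le_dist_u i) (by simp)
  have hv := LipO.tendsto_apply_bump ExPt.one_le_dist F
    (a := fun j => ExPt.v i j) (ExPt.pairwise_two_le_dist_v i) (by simp)
  have hα8 : 0 < α / 8 := by positivity
  obtain ⟨j, hju, hjv⟩ :=
    ((Metric.tendsto_nhds.1 hu _ hα8).and (Metric.tendsto_nhds.1 hv _ hα8)).exists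
  rw [Real.dist_0_eq_abs] at hju hjv
  obtain ⟨G₁, G₂, hfar, hG⟩ := LipO.exists_far_pair ExPt.one_le_dist
    ExPt.dist_le_two (ExPt.dist_eq_one (by simp [ExPt.adj])) _ _ (ExPt.two_le_dist_u i j)
    (ExPt.two_le_dist_v i j) hg' (by rwa [hk']) F
  have hslice : ∀ G ∈ ({G₁, G₂} : Set _), G ∈ {f | ‖f‖ ≤ 1 ∧ 1 - α < F f} := fun G hG' =>
    ⟨(hG G hG').1, by linarith [(hG G hG').2]⟩
  exact diam_eq_two_of_subset_closedBall (fun G hG' => mem_closedBall_zero_iff.2 hG'.1)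
    (hslice G₁ (by simp)) (hslice G₂ (by simp)) hfar
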